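/- For every n ∈ ℕ, Σ_{k=0}^{2n} Σ_{j=0}^{n} ((−1/3)_k / k!) · C(k,j) · 2^{k−j} · C(3n−k, n) · C(2n−k, n−j) = 27^n · (2/9)_n (5/9)_n (8/9)_n / ((5/6)_n · (n!)²). (This expresses, in coefficient form, that the diagonal of (1−x−2y)^{1/3}/(1−x−y−z) equals ₃F₂([2/9, 5/9, 8/9], [5/6, 1], 27x).) -/

import Mathlib

/-!
Write `x = -1/3`, so that `(x)_k / k!` is `Ring.multichoose x k`. Substituting `k = i + j`, the
summand factors as `2^i (x)_i/i! C(2n-i, n)` times `(x+i)_j/j! C(3n-i-j, n-j)`, and the second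
factor is a rising binomial `(2n-i+1)_{n-j}/(n-j)!`. By Chu–Vandermonde the sum over `j` is
`(x+2n+1)_n/n!`, independent of `i`. The remaining sum `∑ᵢ 2^i (x)_i/i! C(2n-i, n)` equals
`4^n ((x+1)/2)_n/n!`, by a Wilf–Zeilberger telescoping in `n`. For `x = -1/3` this leaves
`4^n (1/3)_n (2n+2/3)_n / n!²`, and Gauss' multiplication formula applied to
`(2/3)_{3n} = (2/3)_{2n} (2n+2/3)_n` turns it into the `₃F₂` coefficient.
-/

open Finset Polynomial

theorem Finset.sum_range_eq_sum_range_add_of_eq_zero {M : Type*} [AddCommMonoid M] (f : ℕ → M)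
    {a m N : ℕ} (hN : a + m ≤ N) (hf : ∀ k < N, (k < a ∨ a + m ≤ k) → f k = 0) :
    ∑ k ∈ range N, f k = ∑ i ∈ range m, f (a + i) := by
  rw [← Nat.add_sub_cancel_left (n := a) (m := m), ← sum_Ico_eq_sum_range]
  refine (sum_subset (fun k hk => ?_) fun k hk hk' => hf k ?_ ?_).symm
  · simp only [mem_Ico, mem_range] at hk ⊢; omega
  · simpa using hk
  · simp only [mem_Ico, not_and_or, not_le, not_lt] at hk'; omega

theorem Nat.add_add_choose_mul_add_choose (a b c : ℕ) :
    (a + b + c).choose c * (a + b).choose b = (a + c).choose c * (a + c + b).choose b := by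
  have h := Nat.choose_mul (n := a + b + c) (k := a + b) (s := b) (by omega)
  rw [show a + b + c - b = a + c by omega, Nat.add_sub_cancel, Nat.choose_symm_add] at h
  rw [h, add_right_comm a b c, mul_comm, Nat.choose_symm_add]

namespace Ring

variable {R : Type*} [CommRing R] [BinomialRing R]

theorem multichoose_eq_neg_one_pow_mul_choose_neg (r : R) (n : ℕ) :
    multichoose r n = (-1) ^ n * choose (-r) n := by
  rw [choose_neg', Units.smul_def, Int.coe_negOnePow_natCast, zsmul_eq_mul, ← mul_assoc]
  push_cast
  rw [← mul_pow]
  norm_num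

theorem multichoose_add (r s : R) (k : ℕ) :
    multichoose (r + s) k = ∑ p ∈ antidiagonal k, multichoose r p.1 * multichoose s p.2 := by
  simp only [multichoose_eq_neg_one_pow_mul_choose_neg, neg_add,
    add_choose_eq k (Commute.all (-r) (-s)), mul_sum]
  refine sum_congr rfl fun p hp => ?_
  rw [← mem_antidiagonal.mp hp, pow_add]
  ring

theorem sum_range_multichoose_mul_multichoose (r s : R) (n : ℕ) :
    ∑ j ∈ range (n + 1), multichoose r j * multichoose s (n - j) = multichoose (r + s) n := by
  rw [multichoose_add, Finset.Nat.sum_antidiagonal_eq_sum_range_succ (fun j l =>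
    multichoose r j * multichoose s l)]

theorem multichoose_natCast_succ (m p : ℕ) :
    multichoose ((m + 1 : ℕ) : R) p = (m + p).choose p := by
  rw [multichoose_eq, ← choose_natCast]
  congr 1
  push_cast
  ring

theorem choose_add_nsmul_multichoose (r : R) (i j : ℕ) :
    (i + j).choose j • multichoose r (i + j) = multichoose r i * multichoose (r + i) j := by
  rw [multichoose_eq, choose_smul_choose _ (Nat.le_add_left j i), multichoose_eq,
    multichoose_eq, Nat.add_sub_cancel, mul_comm]
  congr 2 <;> push_cast <;> ring

theorem succ_mul_choose_eq (r : R) (n : ℕ) :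
    (r + 1) * choose r n = choose (r + 1) (n + 1) * (n + 1) := by
  have h := choose_smul_choose (r + 1) (Nat.le_add_left 1 n)
  rw [Nat.choose_one_right, nsmul_eq_mul, choose_one_right, Nat.add_sub_cancel, Nat.cast_one,
    add_sub_cancel_right] at h
  push_cast at h
  rw [← h, mul_comm]

theorem choose_succ_right_eq (r : R) (n : ℕ) :
    choose r (n + 1) * (n + 1) = choose r n * (r - n) := by
  have h := choose_smul_choose r (Nat.le_add_right n 1)
  rw [Nat.choose_succ_self_right, nsmul_eq_mul, Nat.add_sub_cancel_left, choose_one_right] at h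
  push_cast at h
  rw [← h, mul_comm]

theorem natCast_mul_choose_natCast_sub_one_self (n : ℕ) :
    (n : R) * choose ((n : R) - 1) n = 0 := by
  cases n with
  | zero => simp
  | succ m => simp [choose_natCast]

end Ring

section Semiring

variable {S : Type*} [CommSemiring S]

theorem ascPochhammer_eval_add (x : S) (m n : ℕ) :
    (ascPochhammer S (m + n)).eval x =
      (ascPochhammer S m).eval x * (ascPochhammer S n).eval (x + m) := by
  rw [← ascPochhammer_mul, eval_mul, eval_comp]
  simp

theorem ascPochhammer_eval_eq_prod_range (x : S) (n : ℕ) :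
    (ascPochhammer S n).eval x = ∏ r ∈ range n, (x + r) := by
  induction n with
  | zero => simp
  | succ n ih => rw [ascPochhammer_succ_eval, ih, prod_range_succ]

end Semiring

section Field

variable {K : Type*} [Field K] [CharZero K]

theorem Ring.multichoose_eq_eval_ascPochhammer_div (x : K) (k : ℕ) :
    Ring.multichoose x k = (ascPochhammer K k).eval x / k.factorial := by
  rw [eq_div_iff (Nat.cast_ne_zero.mpr k.factorial_ne_zero), mul_comm, ← nsmul_eq_mul,
    Ring.factorial_nsmul_multichoose_eq_ascPochhammer, ascPochhammer_smeval_eq_eval]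

theorem Ring.succ_mul_multichoose_succ (x : K) (k : ℕ) :
    (k + 1) * Ring.multichoose x (k + 1) = (x + k) * Ring.multichoose x k := by
  simp only [Ring.multichoose_eq_eval_ascPochhammer_div, ascPochhammer_succ_eval,
    Nat.factorial_succ]
  push_cast
  field_simp

/-- Gauss' multiplication formula for the Pochhammer symbol. -/
theorem ascPochhammer_eval_mul (x : K) (m n : ℕ) :
    (ascPochhammer K (m * n)).eval x =
      m ^ (m * n) * ∏ r ∈ range m, (ascPochhammer K n).eval ((x + r) / m) := by
  rcases eq_or_ne m 0 with rfl | hm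
  · simp
  induction n with
  | zero => simp
  | succ n ih =>
    have hm' : (m : K) ≠ 0 := Nat.cast_ne_zero.mpr hm
    rw [mul_add, mul_one, ascPochhammer_eval_add, ih, ascPochhammer_eval_eq_prod_range]
    simp only [ascPochhammer_succ_eval, prod_mul_distrib, pow_add]
    rw [show ∏ r ∈ range m, ((x + r) / m + n) = ∏ r ∈ range m, ((x + (m * n : ℕ) + r) / m) from
      prod_congr rfl fun r _ => by push_cast; field_simp; ring, prod_div_distrib, prod_const,
      card_range]
    field_simp

/-- The binomial coefficient takes an argument in `K`, not a truncated difference in `ℕ`, so that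
the recurrence below holds for every `i`. -/
noncomputable def wzSummand (x : K) (n i : ℕ) : K :=
  2 ^ i * Ring.multichoose x i * Ring.choose (2 * n - i : K) n

noncomputable def wzCert (x : K) (n i : ℕ) : K :=
  -(i * 2 ^ i * Ring.multichoose x i * Ring.choose (2 * n + 1 - i : K) n)

theorem wzSummand_recurrence (x : K) (n i : ℕ) :
    (n + 1) * wzSummand x (n + 1) i - 2 * (2 * n + x + 1) * wzSummand x n i =
      wzCert x n (i + 1) - wzCert x n i := by
  set y : K := 2 * n + 1 - i with hy
  have e₁ : (2 * ((n + 1 : ℕ) : K) - i) = y + 1 := by rw [hy]; push_cast; ring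
  have e₂ : (2 * n - i : K) = y - 1 := by rw [hy]; ring
  have e₃ : (2 * n + 1 - ((i + 1 : ℕ) : K)) = y - 1 := by rw [hy]; push_cast; ring
  have hA := Ring.succ_mul_choose_eq y n
  have hB := Ring.succ_mul_choose_eq (y - 1) n
  rw [sub_add_cancel] at hB
  have hC := Ring.choose_succ_right_eq y n
  have hD := Ring.succ_mul_multichoose_succ x i
  simp only [wzSummand, wzCert, e₁, e₂, e₃]
  rw [← hy]
  push_cast
  linear_combination (2 : K) ^ (i + 1) * Ring.choose (y - 1) n * hD
    - 2 ^ i * Ring.multichoose x i * hA - 2 * 2 ^ i * Ring.multichoose x i * hB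
    - 2 * 2 ^ i * Ring.multichoose x i * hC - 2 ^ i * Ring.multichoose x i * Ring.choose y n * hy

theorem wzSummand_boundary (x : K) (n : ℕ) :
    2 * (2 * n + x + 1) * wzSummand x n (n + 1) + wzCert x n (n + 2) = 0 := by
  have e₁ : (2 * n - ((n + 1 : ℕ) : K)) = n - 1 := by push_cast; ring
  have e₂ : (2 * n + 1 - ((n + 2 : ℕ) : K)) = n - 1 := by push_cast; ring
  have hD := Ring.succ_mul_multichoose_succ x (n + 1)
  have hn := Ring.natCast_mul_choose_natCast_sub_one_self (R := K) n
  simp only [wzSummand, wzCert, e₁, e₂]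
  push_cast at hD ⊢
  linear_combination (-(2 : K) ^ (n + 2) * Ring.choose ((n : K) - 1) n) * hD
    + 2 * 2 ^ (n + 1) * Ring.multichoose x (n + 1) * hn

theorem sum_wzSummand (x : K) (n : ℕ) :
    ∑ i ∈ range (n + 1), wzSummand x n i = 4 ^ n * Ring.multichoose ((x + 1) / 2) n := by
  induction n with
  | zero => simp [wzSummand]
  | succ n ih =>
    have htel := sum_range_sub (wzCert x n) (n + 2)
    rw [← sum_congr rfl fun i _ => wzSummand_recurrence x n i, sum_sub_distrib, ← mul_sum,
      ← mul_sum, sum_range_succ (wzSummand x n), ih] at htel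
    have hD := Ring.succ_mul_multichoose_succ ((x + 1) / 2) n
    have hG₀ : wzCert x n 0 = 0 := by simp [wzCert]
    apply mul_left_cancel₀ (Nat.cast_add_one_ne_zero n : ((n : K) + 1) ≠ 0)
    linear_combination htel + wzSummand_boundary x n - 4 ^ (n + 1) * hD - hG₀

theorem sum_two_pow_mul_multichoose_mul_choose (x : K) (n : ℕ) :
    ∑ i ∈ range (n + 1), 2 ^ i * Ring.multichoose x i * ((2 * n - i).choose n : K) =
      4 ^ n * Ring.multichoose ((x + 1) / 2) n := by
  rw [← sum_wzSummand]
  refine sum_congr rfl fun i hi => ?_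
  rw [wzSummand, ← Ring.choose_natCast, Nat.cast_sub (by simp at hi; omega)]
  push_cast
  rfl

noncomputable def diagonalSummand (x : K) (n k j : ℕ) : K :=
  Ring.multichoose x k * k.choose j * 2 ^ (k - j) * (3 * n - k).choose n *
    (2 * n - k).choose (n - j)

theorem diagonalSummand_eq_zero (x : K) {n k j : ℕ} (hk : k ≤ 2 * n) (h : k < j ∨ j + n < k) :
    diagonalSummand x n k j = 0 := by
  rcases h with h | h
  · simp [diagonalSummand, Nat.choose_eq_zero_of_lt h]
  · simp [diagonalSummand, Nat.choose_eq_zero_of_lt (by omega : 2 * n - k < n - j)]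

theorem diagonalSummand_add (x : K) {n i j : ℕ} (hi : i ≤ n) (hj : j ≤ n) :
    diagonalSummand x n (j + i) j = 2 ^ i * Ring.multichoose x i * (2 * n - i).choose n *
      (Ring.multichoose (x + i) j * Ring.multichoose ((2 * n - i + 1 : ℕ) : K) (n - j)) := by
  have hN := Nat.add_add_choose_mul_add_choose (n - i) (n - j) n
  rw [show n - i + (n - j) + n = 3 * n - (i + j) by omega,
    show n - i + (n - j) = 2 * n - (i + j) by omega, show n - i + n = 2 * n - i by omega] at hN
  have hc := Ring.choose_add_nsmul_multichoose x i j
  rw [nsmul_eq_mul] at hc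
  rw [diagonalSummand, add_comm j i, Nat.add_sub_cancel, Ring.multichoose_natCast_succ]
  calc Ring.multichoose x (i + j) * ((i + j).choose j : K) * 2 ^ i * ((3 * n - (i + j)).choose n : K)
        * ((2 * n - (i + j)).choose (n - j) : K)
      = 2 ^ i * (((i + j).choose j : K) * Ring.multichoose x (i + j))
        * (((3 * n - (i + j)).choose n * (2 * n - (i + j)).choose (n - j) : ℕ) : K) := by
        push_cast; ring
    _ = _ := by rw [hc, hN]; push_cast; ring

theorem sum_diagonalSummand (x : K) (n : ℕ) :
    ∑ k ∈ range (2 * n + 1), ∑ j ∈ range (n + 1), diagonalSummand x n k j =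
      4 ^ n * Ring.multichoose ((x + 1) / 2) n * Ring.multichoose (x + 2 * n + 1) n := by
  calc ∑ k ∈ range (2 * n + 1), ∑ j ∈ range (n + 1), diagonalSummand x n k j
      = ∑ j ∈ range (n + 1), ∑ i ∈ range (n + 1), diagonalSummand x n (j + i) j := by
        rw [sum_comm]
        refine sum_congr rfl fun j hj => ?_
        rw [mem_range] at hj
        refine sum_range_eq_sum_range_add_of_eq_zero _ (by omega) fun k hk h => ?_
        exact diagonalSummand_eq_zero x (by omega) (by omega)
    _ = ∑ i ∈ range (n + 1),
          2 ^ i * Ring.multichoose x i * ((2 * n - i).choose n : K) *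
            Ring.multichoose (x + 2 * n + 1) n := by
        rw [sum_comm]
        refine sum_congr rfl fun i hi => ?_
        rw [mem_range] at hi
        have hsum := Ring.sum_range_multichoose_mul_multichoose (x + i)
          ((2 * n - i + 1 : ℕ) : K) n
        rw [show x + i + ((2 * n - i + 1 : ℕ) : K) = x + 2 * n + 1 by
          push_cast [Nat.cast_sub (by omega : i ≤ 2 * n)]; ring] at hsum
        rw [← hsum, mul_sum]
        exact sum_congr rfl fun j hj => diagonalSummand_add x (by omega) (by simp at hj; omega)
    _ = _ := by rw [← sum_mul, sum_two_pow_mul_multichoose_mul_choose]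

/-- Both sides equal `(2/3)_{3n}`. -/
theorem four_pow_mul_ascPochhammer_eq_twentySeven_pow_mul_ascPochhammer (n : ℕ) :
    4 ^ n * (ascPochhammer K n).eval (1 / 3) * (ascPochhammer K n).eval (5 / 6) *
        (ascPochhammer K n).eval (2 * n + 2 / 3 : K) =
      27 ^ n * (ascPochhammer K n).eval (2 / 9) * (ascPochhammer K n).eval (5 / 9) *
        (ascPochhammer K n).eval (8 / 9) := by
  have h₂ := ascPochhammer_eval_mul (2 / 3 : K) 2 n
  have h₃ := ascPochhammer_eval_mul (2 / 3 : K) 3 n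
  have hadd := ascPochhammer_eval_add (2 / 3 : K) (2 * n) n
  rw [show 2 * n + n = 3 * n by ring, h₂, h₃] at hadd
  simp only [prod_range_succ, prod_range_zero, pow_mul] at hadd
  norm_num [add_comm (2 / 3 : K)] at hadd
  linear_combination -hadd

end Field

/-- The diagonal of `(1-x-2y)^{1/3}/(1-x-y-z)` equals
`₃F₂([2/9, 5/9, 8/9], [5/6, 1], 27x)`, stated coefficient-wise. -/
theorem diagonal_1_x_2y_pow_one_third (n : ℕ) :
    ∑ k ∈ range (2 * n + 1), ∑ j ∈ range (n + 1),
        ((ascPochhammer ℚ k).eval (-(1 / 3)) / (Nat.factorial k : ℚ)) *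
          (Nat.choose k j : ℚ) * (2 : ℚ) ^ (k - j) *
          (Nat.choose (3 * n - k) n : ℚ) * (Nat.choose (2 * n - k) (n - j) : ℚ) =
    27 ^ n * (ascPochhammer ℚ n).eval (2 / 9) * (ascPochhammer ℚ n).eval (5 / 9) *
        (ascPochhammer ℚ n).eval (8 / 9) /
      ((ascPochhammer ℚ n).eval (5 / 6) * (Nat.factorial n : ℚ) ^ 2) := by
  have hsum := sum_diagonalSummand (-(1 / 3) : ℚ) n
  simp only [diagonalSummand, Ring.multichoose_eq_eval_ascPochhammer_div] at hsum
  rw [show ((-(1 / 3) + 1) / 2 : ℚ) = 1 / 3 by norm_num,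
    show (-(1 / 3) + 2 * n + 1 : ℚ) = 2 * n + 2 / 3 by ring] at hsum
  rw [hsum, ← four_pow_mul_ascPochhammer_eq_twentySeven_pow_mul_ascPochhammer]
  have h56 : (ascPochhammer ℚ n).eval (5 / 6) ≠ 0 := (ascPochhammer_pos n _ (by norm_num)).ne'
  field_simp
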